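/- arXiv:0902.1582 — 4 statements merged into one kernel-verified Lean document; each statement's English description precedes it below -/
import Mathlib

section
/- For n ≥ 1, the function F(ρ) := (2/n)·ρ^{2/n}·∫₁^ρ (1 - 1/r)·r^{-2/n} dr on (0,∞) is twice differentiable with F''(ρ) = (2/n)·ρ^{2/n - 2}; in particular F is strictly convex on (0,∞) and attains its unique minimum (equal to 0) at ρ = 1. -/
open Real intervalIntegral

noncomputable def F (n : ℕ) (ρ : ℝ) : ℝ :=
  (2/(n : ℝ)) * ρ ^ ((2 : ℝ)/n) * ∫ r in (1 : ℝ)..ρ, (1 - 1/r) * r ^ (-(2 : ℝ)/n)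

/-!
Write `a = 2 / n`. Splitting the integrand as `r ^ (-a) - r ^ (-a - 1)` and integrating the second
term gives `F ρ = a ρ^a ∫₁^ρ r^(-a) dr + 1 - ρ^a`. In the second derivative the remaining integral
only occurs multiplied by `1 - a`, where it equals `ρ^(1-a) - 1` for every `a` (including `a = 1`,
where the integral is a logarithm), so `F'' = a ρ^(a-2) > 0` without any case distinction.
Since moreover `F'(1) = 0`, strict convexity makes `1` the strict minimum.
-/

open Set Filter

theorem strictConvexOn_of_hasDerivAt2_pos {D : Set ℝ} (hD : Convex ℝ D) (hDo : IsOpen D)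
    {f f' f'' : ℝ → ℝ} (hf : ∀ x ∈ D, HasDerivAt f (f' x) x)
    (hf' : ∀ x ∈ D, HasDerivAt f' (f'' x) x) (hf'' : ∀ x ∈ D, 0 < f'' x) :
    StrictConvexOn ℝ D f := by
  have hderiv : EqOn (deriv f) f' D := fun x hx => (hf x hx).deriv
  have hmono : StrictMonoOn f' D :=
    strictMonoOn_of_hasDerivWithinAt_pos hD
      (fun x hx => (hf' x hx).continuousAt.continuousWithinAt)
      (fun x hx => (hf' x (interior_subset hx)).hasDerivWithinAt)
      (fun x hx => hf'' x (interior_subset hx))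
  refine StrictMonoOn.strictConvexOn_of_deriv hD
    (fun x hx => (hf x hx).continuousAt.continuousWithinAt) ?_
  rw [hDo.interior_eq]
  exact hmono.congr hderiv.symm

theorem StrictConvexOn.lt_of_hasDerivAt_zero {S : Set ℝ} {f : ℝ → ℝ} {x y : ℝ}
    (hf : StrictConvexOn ℝ S f) (hx : x ∈ S) (hy : y ∈ S) (hyx : y ≠ x)
    (hf' : HasDerivAt f 0 x) : f x < f y := by
  rcases hyx.lt_or_gt with h | h
  · have hslope := hf.slope_lt_of_hasDerivAt hy hx h hf'
    rw [slope_def_field, div_neg_iff] at hslope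
    rcases hslope with ⟨-, h'⟩ | ⟨h', -⟩ <;> linarith
  · have hslope := hf.lt_slope_of_hasDerivAt hx hy h hf'
    rw [slope_def_field, div_pos_iff] at hslope
    rcases hslope with ⟨h', -⟩ | ⟨-, h'⟩ <;> linarith

theorem uIcc_one_subset_Ioi {ρ : ℝ} (hρ : 0 < ρ) : uIcc 1 ρ ⊆ Ioi 0 :=
  fun _ hr => (lt_min one_pos hρ).trans_le hr.1

theorem zero_notMem_uIcc_one {ρ : ℝ} (hρ : 0 < ρ) : (0:ℝ) ∉ uIcc 1 ρ :=
  fun h => self_notMem_Ioi (uIcc_one_subset_Ioi hρ h)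

theorem intervalIntegrable_rpow_one_of_pos (c : ℝ) {ρ : ℝ} (hρ : 0 < ρ) :
    IntervalIntegrable (fun r : ℝ => r ^ c) MeasureTheory.volume 1 ρ :=
  intervalIntegrable_rpow (Or.inr (zero_notMem_uIcc_one hρ))

theorem mul_integral_rpow_sub_one (b : ℝ) {ρ : ℝ} (hρ : 0 < ρ) :
    b * ∫ r in (1:ℝ)..ρ, r ^ (b - 1) = ρ ^ b - 1 := by
  rcases eq_or_ne b 0 with rfl | hb
  · simp
  rw [integral_rpow (Or.inr ⟨by contrapose! hb; linarith, zero_notMem_uIcc_one hρ⟩)]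
  simp only [sub_add_cancel, one_rpow]
  field_simp

theorem hasDerivAt_integral_rpow (c : ℝ) {ρ : ℝ} (hρ : 0 < ρ) :
    HasDerivAt (fun x => ∫ r in (1:ℝ)..x, r ^ c) (ρ ^ c) ρ :=
  integral_hasDerivAt_right (intervalIntegrable_rpow_one_of_pos c hρ)
    ((continuousOn_id.rpow_const fun _ hr => Or.inl (ne_of_gt hr)).stronglyMeasurableAtFilter
      isOpen_Ioi _ hρ)
    (continuousAt_id.rpow_const (Or.inl hρ.ne'))

noncomputable def Fa (a ρ : ℝ) : ℝ :=
  a * ρ ^ a * ∫ r in (1:ℝ)..ρ, (1 - 1/r) * r ^ (-a)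

noncomputable def Fa' (a ρ : ℝ) : ℝ :=
  a * (a * ρ ^ (a - 1) * (∫ r in (1:ℝ)..ρ, r ^ (-a)) + 1 - ρ ^ (a - 1))

theorem F_eq_Fa (n : ℕ) : F n = Fa (2 / n) := by
  funext ρ
  simp only [F, Fa, neg_div]

theorem Fa_eq {a ρ : ℝ} (hρ : 0 < ρ) :
    Fa a ρ = a * (ρ ^ a * ∫ r in (1:ℝ)..ρ, r ^ (-a)) + 1 - ρ ^ a := by
  have hsplit : ∫ r in (1:ℝ)..ρ, (1 - 1/r) * r ^ (-a)
      = (∫ r in (1:ℝ)..ρ, r ^ (-a)) - ∫ r in (1:ℝ)..ρ, r ^ (-a - 1) := by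
    rw [← integral_sub (intervalIntegrable_rpow_one_of_pos _ hρ)
      (intervalIntegrable_rpow_one_of_pos _ hρ)]
    refine integral_congr fun r hr => ?_
    have hr : 0 < r := uIcc_one_subset_Ioi hρ hr
    simp only [rpow_sub hr, rpow_one]
    field_simp
  have htail := mul_integral_rpow_sub_one (-a) hρ
  have hinv : ρ ^ a * ρ ^ (-a) = 1 := by rw [← rpow_add hρ]; simp
  rw [Fa, hsplit]
  linear_combination ρ ^ a * htail + hinv

theorem Fa_one (a : ℝ) : Fa a 1 = 0 := by simp [Fa]

theorem Fa'_one (a : ℝ) : Fa' a 1 = 0 := by simp [Fa']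

theorem hasDerivAt_Fa (a : ℝ) {ρ : ℝ} (hρ : 0 < ρ) : HasDerivAt (Fa a) (Fa' a ρ) ρ := by
  have hpow : HasDerivAt (fun x : ℝ => x ^ a) (a * ρ ^ (a - 1)) ρ :=
    hasDerivAt_rpow_const (Or.inl hρ.ne')
  have hinv : ρ ^ a * ρ ^ (-a) = 1 := by rw [← rpow_add hρ]; simp
  have h := ((hpow.mul (hasDerivAt_integral_rpow (-a) hρ)).const_mul a).add_const 1 |>.sub hpow
  refine (h.congr_deriv ?_).congr_of_eventuallyEq
    (eventually_of_mem (Ioi_mem_nhds hρ) fun x hx => Fa_eq hx)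
  rw [Fa', hinv]
  ring

theorem hasDerivAt_Fa' (a : ℝ) {ρ : ℝ} (hρ : 0 < ρ) :
    HasDerivAt (Fa' a) (a * ρ ^ (a - 2)) ρ := by
  have hpow : HasDerivAt (fun x : ℝ => x ^ (a - 1)) ((a - 1) * ρ ^ (a - 2)) ρ := by
    simpa [sub_sub, one_add_one_eq_two] using hasDerivAt_rpow_const (p := a - 1) (Or.inl hρ.ne')
  have h := (((hpow.mul (hasDerivAt_integral_rpow (-a) hρ)).const_mul a).add_const 1
    |>.sub hpow).const_mul a
  have hFa' : Fa' a =
      fun x => a * (a * (x ^ (a - 1) * ∫ r in (1:ℝ)..x, r ^ (-a)) + 1 - x ^ (a - 1)) := by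
    funext x
    rw [Fa', mul_assoc a]
  rw [hFa']
  refine h.congr_deriv ?_
  have hI := mul_integral_rpow_sub_one (1 - a) hρ
  rw [show 1 - a - 1 = -a by ring] at hI
  have hpow_mul : ρ ^ (a - 1) * ρ ^ (-a) = ρ ^ (a - 2) * ρ ^ (1 - a) := by
    rw [← rpow_add hρ, ← rpow_add hρ]
    ring_nf
  linear_combination (-a ^ 2 * ρ ^ (a - 2)) * hI + a ^ 2 * hpow_mul

theorem strictConvexOn_Fa {a : ℝ} (ha : 0 < a) : StrictConvexOn ℝ (Ioi 0) (Fa a) :=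
  strictConvexOn_of_hasDerivAt2_pos (convex_Ioi 0) isOpen_Ioi (fun _ hρ => hasDerivAt_Fa a hρ)
    (fun _ hρ => hasDerivAt_Fa' a hρ) fun ρ (hρ : 0 < ρ) => by positivity

theorem F_second_deriv_and_convex (n : ℕ) (hn : 1 ≤ n) :
    (∃ F' : ℝ → ℝ, ∀ ρ : ℝ, 0 < ρ →
      HasDerivAt (F n) (F' ρ) ρ ∧
      HasDerivAt F' ((2/(n : ℝ)) * ρ ^ ((2 : ℝ)/n - 2)) ρ) ∧
    StrictConvexOn ℝ (Set.Ioi (0 : ℝ)) (F n) ∧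
    F n 1 = 0 ∧
    (∀ ρ : ℝ, 0 < ρ → ρ ≠ 1 → F n 1 < F n ρ) := by
  have ha : (0 : ℝ) < 2 / n := by positivity
  have hconvex := strictConvexOn_Fa ha
  have hcrit : HasDerivAt (Fa (2 / n)) 0 1 := Fa'_one (2 / n) ▸ hasDerivAt_Fa _ one_pos
  rw [F_eq_Fa]
  refine ⟨⟨Fa' (2 / n), fun ρ hρ => ⟨hasDerivAt_Fa _ hρ, hasDerivAt_Fa' _ hρ⟩⟩, hconvex,
    Fa_one _, fun ρ hρ hρ1 => ?_⟩
  exact hconvex.lt_of_hasDerivAt_zero (mem_Ioi.2 one_pos) hρ hρ1 hcrit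
end

section
/- Comparison principle: Let (d,ρ) satisfy d' ≤ -(1/n)d² - (ρ - 1), ρ' = -dρ, and let (e,ζ) satisfy e' = -(1/n)e² - (ζ - 1), ζ' = -eζ, all C¹ on [0,T]. If d(0) < e(0) and 0 < ζ(0) < ρ(0), then d(t) < e(t) and 0 < ζ(t) < ρ(t) for all t ∈ [0,T]. -/
/-!
The gaps `u = e - d` and `v = ρ - ζ` form a cooperative system:
`u' ≥ -(d + e) u / n + v` and `v' = -d v + ζ u`, where `ζ > 0` because `ζ' = -e ζ`.
While `u, v ≥ 0` the coupling terms are nonnegative, so each gap satisfies `f' ≥ -a f`, and the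
integrating factor `exp (∫ a)` keeps it above `f 0 · exp (-∫ a) > 0`. At the first time where
`min u v` would vanish this is a contradiction.
-/

open Set Real

theorem exp_neg_integral_mul_le_of_hasDerivAt {f f' a : ℝ → ℝ} {x y : ℝ} (hxy : x ≤ y)
    (hf : ContinuousOn f (Icc x y)) (ha : ContinuousOn a (Icc x y))
    (hf' : ∀ s ∈ Ioo x y, HasDerivAt f (f' s) s)
    (hbound : ∀ s ∈ Ioo x y, -(a s * f s) ≤ f' s) :
    exp (-∫ s in x..y, a s) * f x ≤ f y := by
  set A : ℝ → ℝ := fun t => ∫ s in x..t, a s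
  have hA_cont : ContinuousOn A (Icc x y) := by
    simpa only [uIcc_of_le hxy] using intervalIntegral.continuousOn_primitive_interval
      (ha.integrableOn_Icc.mono_set (uIcc_of_le hxy).subset)
  have hA_deriv : ∀ s ∈ Ioo x y, HasDerivAt A (a s) s := fun s hs =>
    intervalIntegral.integral_hasDerivAt_right
      ((ha.mono (Icc_subset_Icc_right hs.2.le)).intervalIntegrable_of_Icc hs.1.le)
      ((ha.mono Ioo_subset_Icc_self).stronglyMeasurableAtFilter isOpen_Ioo s hs)
      (ha.continuousAt (Icc_mem_nhds hs.1 hs.2))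
  have hmono : MonotoneOn (fun t => f t * exp (A t)) (Icc x y) := by
    refine monotoneOn_of_hasDerivWithinAt_nonneg (convex_Icc x y) (hf.mul hA_cont.rexp)
      (f' := fun s => (f' s + a s * f s) * exp (A s)) ?_ ?_ <;> rw [interior_Icc] <;>
      intro s hs
    · exact (((hf' s hs).mul (hA_deriv s hs).exp).congr_deriv (by ring)).hasDerivWithinAt
    · exact mul_nonneg (by linarith [hbound s hs]) (exp_pos _).le
  have hxy' : f x ≤ f y * exp (A y) := by
    simpa [A] using hmono (left_mem_Icc.2 hxy) (right_mem_Icc.2 hxy) hxy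
  calc exp (-A y) * f x ≤ exp (-A y) * (f y * exp (A y)) := by gcongr
    _ = f y := by rw [mul_left_comm, ← exp_add, neg_add_cancel, exp_zero, mul_one]

theorem pos_of_hasDerivAt_ge_neg_mul {f f' a : ℝ → ℝ} {x y t : ℝ}
    (hf : ∀ s ∈ Icc x y, HasDerivAt f (f' s) s) (ha : ContinuousOn a (Icc x y))
    (ht : t ∈ Icc x y) (hbound : ∀ s ∈ Icc x t, -(a s * f s) ≤ f' s) (hx : 0 < f x) :
    0 < f t := by
  have hsub : Icc x t ⊆ Icc x y := Icc_subset_Icc_right ht.2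
  refine (mul_pos (exp_pos _) hx).trans_le (exp_neg_integral_mul_le_of_hasDerivAt ht.1
    (fun s hs => (hf s (hsub hs)).continuousAt.continuousWithinAt) (ha.mono hsub)
    (fun s hs => hf s (hsub (Ioo_subset_Icc_self hs)))
    (fun s hs => hbound s (Ioo_subset_Icc_self hs)))

theorem ContinuousOn.forall_pos_of_nonneg_imp_pos {f : ℝ → ℝ} {a b : ℝ}
    (hf : ContinuousOn f (Icc a b)) (ha : 0 < f a)
    (hstep : ∀ t ∈ Ioc a b, (∀ s ∈ Icc a t, 0 ≤ f s) → 0 < f t) :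
    ∀ t ∈ Icc a b, 0 < f t := by
  by_contra! hbad
  set S := Icc a b ∩ f ⁻¹' Iic 0
  have hS_closed : IsClosed S := hf.preimage_isClosed_of_isClosed isClosed_Icc isClosed_Iic
  have hS_bdd : BddBelow S := ⟨a, fun s hs => hs.1.1⟩
  obtain ⟨t, ht, hft⟩ := hbad
  have ht₁ : sInf S ∈ S := hS_closed.csInf_mem ⟨t, ht, hft⟩ hS_bdd
  have ha_lt : a < sInf S := ht₁.1.1.lt_of_ne fun h => by
    have : f a ≤ 0 := h ▸ ht₁.2
    linarith
  have hpos_before : Ico a (sInf S) ⊆ Icc a (sInf S) ∩ f ⁻¹' Ici 0 := fun s hs =>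
    ⟨Ico_subset_Icc_self hs, show 0 ≤ f s from le_of_lt <| not_le.1 fun hfs =>
      hs.2.not_ge (csInf_le hS_bdd ⟨⟨hs.1, hs.2.le.trans ht₁.1.2⟩, hfs⟩)⟩
  have hnonneg : Icc a (sInf S) ⊆ Icc a (sInf S) ∩ f ⁻¹' Ici 0 := by
    refine (closure_Ico ha_lt.ne).symm.subset.trans <| closure_minimal hpos_before <|
      (hf.mono (Icc_subset_Icc_right ht₁.1.2)).preimage_isClosed_of_isClosed isClosed_Icc
        isClosed_Ici
  exact (hstep _ ⟨ha_lt, ht₁.1.2⟩ fun s hs => (hnonneg hs).2).not_ge ht₁.2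

theorem comparison_principle_general (n : ℕ) (T : ℝ)
    (d ρ e ζ d' : ℝ → ℝ)
    (hd : ∀ t ∈ Set.Icc 0 T, HasDerivAt d (d' t) t)
    (hd' : ∀ t ∈ Set.Icc 0 T, d' t ≤ -(1/(n : ℝ)) * (d t)^2 - (ρ t - 1))
    (hρ : ∀ t ∈ Set.Icc 0 T, HasDerivAt ρ (-(d t) * ρ t) t)
    (he : ∀ t ∈ Set.Icc 0 T, HasDerivAt e (-(1/(n : ℝ)) * (e t)^2 - (ζ t - 1)) t)
    (hζ : ∀ t ∈ Set.Icc 0 T, HasDerivAt ζ (-(e t) * ζ t) t)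
    (h0 : d 0 < e 0) (hζ0 : 0 < ζ 0) (hζρ0 : ζ 0 < ρ 0) :
    ∀ t ∈ Set.Icc 0 T, d t < e t ∧ 0 < ζ t ∧ ζ t < ρ t := by
  have cont {g g' : ℝ → ℝ} (hg : ∀ t ∈ Icc 0 T, HasDerivAt g (g' t) t) :
      ContinuousOn g (Icc 0 T) := fun t ht => (hg t ht).continuousAt.continuousWithinAt
  have hζ_pos : ∀ t ∈ Icc 0 T, 0 < ζ t := fun t ht =>
    pos_of_hasDerivAt_ge_neg_mul hζ (cont he) ht (fun s _ => (neg_mul _ _).ge) hζ0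
  have hu : ∀ t ∈ Icc 0 T, HasDerivAt (fun s => e s - d s)
      (-(1 / (n : ℝ)) * e t ^ 2 - (ζ t - 1) - d' t) t := fun t ht => (he t ht).sub (hd t ht)
  have hv : ∀ t ∈ Icc 0 T, HasDerivAt (fun s => ρ s - ζ s) (-d t * ρ t - -e t * ζ t) t :=
    fun t ht => (hρ t ht).sub (hζ t ht)
  have hgaps : ∀ t ∈ Icc 0 T, 0 < min (e t - d t) (ρ t - ζ t) := by
    refine (ContinuousOn.inf (cont hu) (cont hv)).forall_pos_of_nonneg_imp_pos
      (lt_min (by linarith) (by linarith)) fun t ht hnonneg => ?_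
    have ht' : t ∈ Icc 0 T := Ioc_subset_Icc_self ht
    have hsub : Icc 0 t ⊆ Icc 0 T := Icc_subset_Icc_right ht.2
    replace hnonneg : ∀ s ∈ Icc 0 t, 0 ≤ e s - d s ∧ 0 ≤ ρ s - ζ s :=
      fun s hs => le_min_iff.1 (hnonneg s hs)
    refine lt_min ?_ ?_
    · refine pos_of_hasDerivAt_ge_neg_mul (t := t) hu (a := fun s => 1 / (n : ℝ) * (d s + e s))
        (continuousOn_const.mul ((cont hd).add (cont he))) ht' (fun s hs => ?_) (by linarith)
      nlinarith [hd' s (hsub hs), (hnonneg s hs).2]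
    · refine pos_of_hasDerivAt_ge_neg_mul (t := t) hv (cont hd) ht' (fun s hs => ?_) (by linarith)
      nlinarith [hζ_pos s (hsub hs), (hnonneg s hs).1]
  intro t ht
  obtain ⟨hu_pos, hv_pos⟩ := lt_min_iff.1 (hgaps t ht)
  exact ⟨sub_pos.1 hu_pos, hζ_pos t ht, sub_pos.1 hv_pos⟩

theorem comparison_principle (n : ℕ) (hn : 1 ≤ n) (T : ℝ) (hT : 0 ≤ T)
    (d ρ e ζ d' : ℝ → ℝ)
    (hd : ∀ t ∈ Set.Icc 0 T, HasDerivAt d (d' t) t)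
    (hd' : ∀ t ∈ Set.Icc 0 T, d' t ≤ -(1/(n : ℝ)) * (d t)^2 - (ρ t - 1))
    (hρ : ∀ t ∈ Set.Icc 0 T, HasDerivAt ρ (-(d t) * ρ t) t)
    (he : ∀ t ∈ Set.Icc 0 T, HasDerivAt e (-(1/(n : ℝ)) * (e t)^2 - (ζ t - 1)) t)
    (hζ : ∀ t ∈ Set.Icc 0 T, HasDerivAt ζ (-(e t) * ζ t) t)
    (h0 : d 0 < e 0) (hζ0 : 0 < ζ 0) (hζρ0 : ζ 0 < ρ 0) :
    ∀ t ∈ Set.Icc 0 T, d t < e t ∧ 0 < ζ t ∧ ζ t < ρ t :=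
  comparison_principle_general n T d ρ e ζ d' hd hd' hρ he hζ h0 hζ0 hζρ0
end

section
/- In region Ω₁, d stays negative: let n ≥ 1 and let (d,ρ) solve d' = -(1/n)d² - (ρ-1), ρ' = -dρ on [0,T) with ρ > 0, and suppose the invariant I := ρ^{-2/n}(d² - nF(ρ)) satisfies I > 0 and d(0) < 0. Then d(t) < 0 for all t ∈ [0,T), and moreover d(t) ≤ -ρ(t)^{1/n}·√I. -/
/-!
Along a solution, `E = ρ^(-2/n) d² - 2 ∫₁^ρ (1 - 1/r) r^(-2/n) dr` is conserved and equals the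
invariant `I`, and the integral is nonnegative for every `ρ > 0` since its integrand has the sign
of `r - 1`. Hence `d² ≥ ρ^(2/n) I > 0`, so `d` never vanishes and, being continuous, keeps the
sign of `d 0`; taking square roots gives the bound.
-/

open Real intervalIntegral

noncomputable def potential (a x : ℝ) : ℝ := ∫ r in (1 : ℝ)..x, (1 - 1 / r) * r ^ a

lemma continuousOn_potential_integrand (a : ℝ) :
    ContinuousOn (fun r : ℝ => (1 - 1 / r) * r ^ a) (Set.Ioi 0) := by
  fun_prop (disch := intro x hx; exact (Set.mem_Ioi.mp hx).ne')

lemma hasDerivAt_potential (a : ℝ) {x : ℝ} (hx : 0 < x) :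
    HasDerivAt (potential a) ((1 - 1 / x) * x ^ a) x := by
  have hcont := continuousOn_potential_integrand a
  refine integral_hasDerivAt_right ?_ (hcont.stronglyMeasurableAtFilter isOpen_Ioi x hx)
    (hcont.continuousAt (Ioi_mem_nhds hx))
  refine (hcont.mono fun r hr => ?_).intervalIntegrable
  rcases Set.mem_uIcc.mp hr with h | h
  · exact one_pos.trans_le h.1
  · exact hx.trans_le h.1

lemma potential_nonneg (a : ℝ) {x : ℝ} (hx : 0 < x) : 0 ≤ potential a x := by
  rcases le_or_gt 1 x with h1x | hx1
  · refine integral_nonneg h1x fun r hr => mul_nonneg ?_ (rpow_nonneg (by linarith [hr.1]) _)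
    have : 1 / r ≤ 1 := (div_le_one (by linarith [hr.1])).mpr hr.1
    linarith
  · rw [potential, integral_symm, ← integral_neg]
    refine integral_nonneg hx1.le fun r hr => ?_
    have hr0 : 0 < r := hx.trans_le hr.1
    have : 1 ≤ 1 / r := (le_div_iff₀ hr0).mpr (by linarith [hr.2])
    nlinarith [rpow_nonneg hr0.le a]

lemma rpow_neg_two_div_mul_sub_mul_F {n : ℕ} (hn : (n : ℝ) ≠ 0) {x : ℝ} (hx : 0 < x)
    (y : ℝ) :
    x ^ (-(2 : ℝ) / n) * (y ^ 2 - n * F n x) =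
      x ^ (-(2 : ℝ) / n) * y ^ 2 - 2 * potential (-(2 : ℝ) / n) x := by
  have hcancel : x ^ (-(2 : ℝ) / n) * x ^ ((2 : ℝ) / n) = 1 := by
    rw [← rpow_add hx, neg_div, neg_add_cancel, rpow_zero]
  have hF : n * F n x = 2 * x ^ ((2 : ℝ) / n) * potential (-(2 : ℝ) / n) x := by
    rw [F, ← potential]
    field_simp
  rw [hF]
  linear_combination (-2 * potential (-(2 : ℝ) / n) x) * hcancel

noncomputable def energy (k : ℝ) (d ρ : ℝ → ℝ) (t : ℝ) : ℝ :=
  ρ t ^ (-2 / k) * d t ^ 2 - 2 * potential (-2 / k) (ρ t)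

lemma hasDerivAt_energy {k : ℝ} {d ρ : ℝ → ℝ} {t : ℝ} (hρt : 0 < ρ t)
    (hd : HasDerivAt d (-(1 / k) * d t ^ 2 - (ρ t - 1)) t)
    (hρ : HasDerivAt ρ (-d t * ρ t) t) :
    HasDerivAt (energy k d ρ) 0 t := by
  have hkin := (hρ.rpow_const (p := -2 / k) (Or.inl hρt.ne')).fun_mul (hd.fun_pow 2)
  have hpot := ((hasDerivAt_potential (-2 / k) hρt).comp t hρ).const_mul 2
  refine (hkin.sub hpot).congr_deriv ?_
  rw [rpow_sub_one hρt.ne']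
  field_simp
  ring

lemma eq_of_hasDerivAt_zero_of_mem_Ico {f : ℝ → ℝ} {a b : ℝ}
    (hf : ∀ x ∈ Set.Ico a b, HasDerivAt f 0 x) {t : ℝ} (ht : t ∈ Set.Ico a b) :
    f t = f a := by
  have hsub : Set.Icc a t ⊆ Set.Ico a b := Set.Icc_subset_Ico_right ht.2
  exact constant_of_has_deriv_right_zero
    (fun x hx => (hf x (hsub hx)).continuousAt.continuousWithinAt)
    (fun x hx => (hf x (hsub (Set.Ico_subset_Icc_self hx))).hasDerivWithinAt)
    t (Set.right_mem_Icc.mpr ht.1)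

lemma IsPreconnected.neg_of_continuousOn_of_ne_zero {s : Set ℝ} (hs : IsPreconnected s)
    {f : ℝ → ℝ} (hf : ContinuousOn f s) (hf0 : ∀ x ∈ s, f x ≠ 0) {a : ℝ}
    (ha : a ∈ s) (hfa : f a < 0) {t : ℝ} (ht : t ∈ s) : f t < 0 := by
  by_contra! hft
  obtain ⟨c, hc, hfc⟩ := hs.intermediate_value ha ht hf ⟨hfa.le, hft⟩
  exact hf0 c hc hfc

lemma le_neg_rpow_mul_sqrt {k x y I : ℝ} (hx : 0 < x) (hy : y ≤ 0) (hI : 0 ≤ I)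
    (hIy : I ≤ x ^ (-2 / k) * y ^ 2) : y ≤ -x ^ (1 / k) * √I := by
  have hsq : (x ^ (1 / k) * √I) ^ 2 ≤ y ^ 2 := calc
    (x ^ (1 / k) * √I) ^ 2 = x ^ (2 / k) * I := by
      rw [mul_pow, sq_sqrt hI, ← rpow_two, ← rpow_mul hx.le]; ring_nf
    _ ≤ x ^ (2 / k) * (x ^ (-2 / k) * y ^ 2) := by gcongr
    _ = y ^ 2 := by rw [← mul_assoc, ← rpow_add hx, neg_div, add_neg_cancel, rpow_zero, one_mul]
  nlinarith [mul_nonneg (rpow_nonneg hx.le (1 / k)) (sqrt_nonneg I)]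

theorem region_Omega1_d_negative (n : ℕ) (hn : 1 ≤ n) (T : ℝ) (d ρ : ℝ → ℝ)
    (hρpos : ∀ t ∈ Set.Ico 0 T, 0 < ρ t)
    (hd : ∀ t ∈ Set.Ico 0 T, HasDerivAt d (-(1/(n : ℝ)) * (d t)^2 - (ρ t - 1)) t)
    (hρ : ∀ t ∈ Set.Ico 0 T, HasDerivAt ρ (-(d t) * ρ t) t)
    (h0 : (0 : ℝ) ∈ Set.Ico 0 T)
    (I : ℝ) (hI : I = (ρ 0) ^ (-(2 : ℝ)/n) * ((d 0)^2 - n * F n (ρ 0)))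
    (hIpos : 0 < I) (hd0 : d 0 < 0) :
    ∀ t ∈ Set.Ico 0 T, d t < 0 ∧ d t ≤ -(ρ t) ^ ((1 : ℝ)/n) * Real.sqrt I := by
  have hn0 : (n : ℝ) ≠ 0 := Nat.cast_ne_zero.mpr (by omega)
  have hconserved : ∀ t ∈ Set.Ico 0 T, energy n d ρ t = I := fun t ht => by
    rw [eq_of_hasDerivAt_zero_of_mem_Ico
      (fun s hs => hasDerivAt_energy (hρpos s hs) (hd s hs) (hρ s hs)) ht,
      hI, rpow_neg_two_div_mul_sub_mul_F hn0 (hρpos 0 h0), energy]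
  have hlower : ∀ t ∈ Set.Ico 0 T, I ≤ ρ t ^ (-(2 : ℝ) / n) * d t ^ 2 := fun t ht => by
    have := potential_nonneg (-(2 : ℝ) / n) (hρpos t ht)
    rw [← hconserved t ht, energy]
    linarith
  have hneg : ∀ t ∈ Set.Ico 0 T, d t < 0 := fun t ht =>
    isPreconnected_Ico.neg_of_continuousOn_of_ne_zero
      (fun s hs => (hd s hs).continuousAt.continuousWithinAt)
      (fun s hs hds => by simpa [hds] using hIpos.trans_le (hlower s hs)) h0 hd0 ht
  exact fun t ht =>
    ⟨hneg t ht, le_neg_rpow_mul_sqrt (hρpos t ht) (hneg t ht).le hIpos.le (hlower t ht)⟩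
end

section
/- Blow-up of the majorant system: let n ≥ 1 and let (d,ρ) be a maximal C¹ solution on [0,T) of d' = -(1/n)d² - (ρ-1), ρ' = -dρ with ρ(0) > 0 and d(0) < sgn(ρ(0)-1)·√(nF(ρ(0))). Then T < ∞, and d(t) → -∞, ρ(t) → +∞ as t ↑ T. -/
/-!
Along solutions the quantity `I(d, ρ) = d² ρ^{-2/n} - 2 J(ρ)`, `J(ρ) = ∫₁^ρ (1 - 1/r) r^{-2/n} dr`,
is conserved. The region `{d < 0, ρ > 1}` is a trap: there `d` decreases, `ρ` increases, and
`(1/d)' ≥ 1/n`, so a solution entering it has finite lifespan. The hypothesis on the initial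
data says that `(d(0), ρ(0))` lies in the trap, or on a level set `I > 0` with `d < 0`, or on a
level set `I < 0` with `ρ > 1`. On the first kind of level set `d` cannot vanish, so `ρ` grows at
a rate bounded below; on the second `ρ` cannot reach `1`, so `d` decreases at a rate bounded
below. Either way a solution avoiding the trap would stay in a compact subset of `ℝ × (0, ∞)` for
a bounded time, and could then be continued, contradicting maximality. Finally, in the trap the
conservation law shows that `d` is bounded exactly when `ρ` is, and a maximal solution with
finite lifespan leaves every compact subset of `ℝ × (0, ∞)`; by monotonicity `d → -∞` and
`ρ → +∞`.
-/

open Real Filter intervalIntegral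

open Set Metric Topology

theorem monotoneOn_of_forall_hasDerivAt_nonneg {D : Set ℝ} (hD : Convex ℝ D) {f f' : ℝ → ℝ}
    (hf : ∀ x ∈ D, HasDerivAt f (f' x) x) (hf' : ∀ x ∈ interior D, 0 ≤ f' x) :
    MonotoneOn f D :=
  monotoneOn_of_hasDerivWithinAt_nonneg hD
    (fun x hx ↦ (hf x hx).continuousAt.continuousWithinAt)
    (fun x hx ↦ (hf x (interior_subset hx)).hasDerivWithinAt) hf'

theorem antitoneOn_of_forall_hasDerivAt_nonpos {D : Set ℝ} (hD : Convex ℝ D) {f f' : ℝ → ℝ}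
    (hf : ∀ x ∈ D, HasDerivAt f (f' x) x) (hf' : ∀ x ∈ interior D, f' x ≤ 0) :
    AntitoneOn f D :=
  antitoneOn_of_hasDerivWithinAt_nonpos hD
    (fun x hx ↦ (hf x hx).continuousAt.continuousWithinAt)
    (fun x hx ↦ (hf x (interior_subset hx)).hasDerivWithinAt) hf'

theorem ContinuousOn.exists_first_le {f : ℝ → ℝ} {a b c : ℝ} (hf : ContinuousOn f (Icc a b))
    (hab : a ≤ b) (hb : c ≤ f b) : ∃ τ ∈ Icc a b, c ≤ f τ ∧ ∀ t ∈ Ico a τ, f t < c := by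
  have hS : IsClosed (Icc a b ∩ f ⁻¹' Ici c) :=
    hf.preimage_isClosed_of_isClosed isClosed_Icc isClosed_Ici
  obtain ⟨τ, ⟨hτ, hcτ⟩, hleast⟩ := (isCompact_Icc.of_isClosed_subset hS inter_subset_left
    ).exists_isLeast ⟨b, ⟨hab, le_rfl⟩, hb⟩
  refine ⟨τ, hτ, hcτ, fun t ht ↦ not_le.1 fun hct ↦ ?_⟩
  exact (hleast ⟨⟨ht.1, ht.2.le.trans hτ.2⟩, hct⟩).not_gt ht.2

theorem MonotoneOn.tendsto_nhdsLT_atTop {f : ℝ → ℝ} {a b : ℝ} (hf : MonotoneOn f (Ico a b))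
    (hbdd : ¬ BddAbove (f '' Ico a b)) : Tendsto f (𝓝[<] b) atTop := by
  refine tendsto_atTop.2 fun y ↦ ?_
  obtain ⟨_, ⟨t, ht, rfl⟩, hy⟩ := not_bddAbove_iff.1 hbdd y
  filter_upwards [Ioo_mem_nhdsLT ht.2] with s hs
  exact hy.le.trans (hf ht ⟨ht.1.trans hs.1.le, hs.2⟩ hs.1.le)

theorem AntitoneOn.tendsto_nhdsLT_atBot {f : ℝ → ℝ} {a b : ℝ} (hf : AntitoneOn f (Ico a b))
    (hbdd : ¬ BddBelow (f '' Ico a b)) : Tendsto f (𝓝[<] b) atBot := by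
  refine tendsto_atBot.2 fun y ↦ ?_
  obtain ⟨_, ⟨t, ht, rfl⟩, hy⟩ := not_bddBelow_iff.1 hbdd y
  filter_upwards [Ioo_mem_nhdsLT ht.2] with s hs
  exact (hf ht ⟨ht.1.trans hs.1.le, hs.2⟩ hs.1.le).trans hy.le

theorem Convex.mul_sub_le_image_sub_of_forall_hasDerivAt {D : Set ℝ} (hD : Convex ℝ D)
    {f f' : ℝ → ℝ} (hf : ∀ x ∈ D, HasDerivAt f (f' x) x) {C : ℝ}
    (hC : ∀ x ∈ interior D, C ≤ f' x) {x y : ℝ} (hx : x ∈ D) (hy : y ∈ D) (hxy : x ≤ y) :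
    C * (y - x) ≤ f y - f x :=
  hD.mul_sub_le_image_sub_of_le_deriv (fun z hz ↦ (hf z hz).continuousAt.continuousWithinAt)
    (fun z hz ↦ (hf z (interior_subset hz)).differentiableAt.differentiableWithinAt)
    (fun z hz ↦ (hf z (interior_subset hz)).deriv ▸ hC z hz) x hx y hy hxy

theorem Convex.image_sub_le_mul_sub_of_forall_hasDerivAt {D : Set ℝ} (hD : Convex ℝ D)
    {f f' : ℝ → ℝ} (hf : ∀ x ∈ D, HasDerivAt f (f' x) x) {C : ℝ}
    (hC : ∀ x ∈ interior D, f' x ≤ C) {x y : ℝ} (hx : x ∈ D) (hy : y ∈ D) (hxy : x ≤ y) :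
    f y - f x ≤ C * (y - x) :=
  hD.image_sub_le_mul_sub_of_deriv_le (fun z hz ↦ (hf z hz).continuousAt.continuousWithinAt)
    (fun z hz ↦ (hf z (interior_subset hz)).differentiableAt.differentiableWithinAt)
    (fun z hz ↦ (hf z (interior_subset hz)).deriv ▸ hC z hz) x hx y hy hxy

section ODE

variable {E : Type*} [NormedAddCommGroup E] [NormedSpace ℝ E] {v : E → E}

theorem exists_glue_of_eqOn_Ioo {u α : ℝ → E} {a b c e : ℝ} (hcb : c < b)
    (hu : ∀ t ∈ Ico a b, HasDerivAt u (v (u t)) t) (hα : ∀ t ∈ Ioo c e, HasDerivAt α (v (α t)) t)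
    (huα : EqOn u α (Ioo c b)) :
    ∃ w : ℝ → E, EqOn w u (Iio b) ∧ EqOn w α (Ici b) ∧
      ∀ t ∈ Ico a e, HasDerivAt w (v (w t)) t := by
  refine ⟨fun t ↦ if t < b then u t else α t, fun _ h ↦ if_pos h,
    fun _ h ↦ if_neg (not_lt.2 h), fun t ht ↦ ?_⟩
  rcases lt_or_ge t b with htb | htb
  · have hw : (fun t ↦ if t < b then u t else α t) =ᶠ[𝓝 t] u :=
      (eventually_lt_nhds htb).mono fun _ h ↦ if_pos h
    beta_reduce
    rw [if_pos htb]
    exact (hu t ⟨ht.1, htb⟩).congr_of_eventuallyEq hw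
  · have hw : (fun t ↦ if t < b then u t else α t) =ᶠ[𝓝 t] α := by
      filter_upwards [eventually_gt_nhds (hcb.trans_le htb)] with s hs
      split_ifs with hsb
      exacts [huα ⟨hs, hsb⟩, rfl]
    beta_reduce
    rw [if_neg (not_lt.2 htb)]
    exact (hα t ⟨hcb.trans_le htb, ht.2⟩).congr_of_eventuallyEq hw

variable [CompleteSpace E]

theorem exists_solution_past_of_eventually_mem_isCompact (hv : ContDiff ℝ 1 v) {K : Set E}
    (hK : IsCompact K) {u : ℝ → E} {a b : ℝ} (hab : a < b)
    (hu : ∀ t ∈ Ico a b, HasDerivAt u (v (u t)) t) (huK : ∀ᶠ t in 𝓝[<] b, u t ∈ K) :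
    ∃ c < b, ∃ e > b, ∃ α : ℝ → E, (∀ t ∈ Ioo c e, HasDerivAt α (v (α t)) t) ∧
      EqOn u α (Ioo c b) ∧ α b ∈ K := by
  obtain ⟨x₀, -, hx₀⟩ := hK.exists_clusterPt (f := map u (𝓝[<] b)) (tendsto_principal.2 huK)
  obtain ⟨ε, hε, a₀, r, L₀, K₀, hr, hpl⟩ := IsPicardLindelof.of_contDiffAt_one hv.contDiffAt
    (x₀ := x₀)
  obtain ⟨c, hcb, hcK⟩ := mem_nhdsLT_iff_exists_Ioo_subset.1 huK
  set c' := max (max a c) (b - ε / 2)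
  have hc'b : c' < b := max_lt (max_lt hab hcb) (by linarith)
  -- Picard–Lindelöf solves on intervals of the same length `2ε` from every point near `x₀`, so
  -- restarting at a time `t₁ > b - ε / 2` at which `u` is near `x₀` reaches beyond `b`.
  obtain ⟨t₁, hux₀, ht₁⟩ : ∃ t₁, u t₁ ∈ closedBall x₀ r ∧ t₁ ∈ Ioo c' b :=
    ((Filter.frequently_map.1 (hx₀.frequently (closedBall_mem_nhds x₀ hr))).and_eventually
      (Ioo_mem_nhdsLT hc'b)).exists
  obtain ⟨α, hα₁, hα⟩ := (hpl t₁).exists_eq_forall_mem_Icc_hasDerivWithinAt hux₀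
  have hc'ε : t₁ - ε < c' := by linarith [ht₁.2, le_max_right (max a c) (b - ε / 2)]
  have hbε : b < t₁ + ε := by linarith [ht₁.1, le_max_right (max a c) (b - ε / 2)]
  have hαI : ∀ t ∈ Ioo c' (t₁ + ε), HasDerivAt α (v (α t)) t := fun t ht ↦
    (hα t ⟨(hc'ε.trans ht.1).le, ht.2.le⟩).hasDerivAt (Icc_mem_nhds (hc'ε.trans ht.1) ht.2)
  have huK' : ∀ t ∈ Ioo c' b, u t ∈ K := fun t ht ↦
    hcK ⟨(le_max_right _ _).trans_lt ((le_max_left _ _).trans_lt ht.1), ht.2⟩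
  have huα : EqOn u α (Ioo c' b) := by
    have hαc : ContinuousOn α (Icc (t₁ - ε) (t₁ + ε)) := fun t ht ↦ (hα t ht).continuousWithinAt
    have hS : IsCompact (K ∪ α '' Icc c' b) := hK.union
      (isCompact_Icc.image_of_continuousOn (hαc.mono (Icc_subset_Icc hc'ε.le hbε.le)))
    obtain ⟨L, hL⟩ := hv.locallyLipschitz.locallyLipschitzOn.exists_lipschitzOnWith_of_compact hS
    refine ODE_solution_unique_of_mem_Ioo (v := fun _ ↦ v) (fun _ _ ↦ hL) ht₁
      (fun t ht ↦ ⟨hu t ⟨(le_max_left _ _).trans ((le_max_left _ _).trans ht.1.le), ht.2⟩,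
        Or.inl (huK' t ht)⟩)
      (fun t ht ↦ ⟨hαI t ⟨ht.1, ht.2.trans hbε⟩, Or.inr ⟨t, Ioo_subset_Icc_self ht, rfl⟩⟩)
      hα₁.symm
  refine ⟨c', hc'b, t₁ + ε, hbε, α, hαI, huα, hK.isClosed.mem_of_tendsto
    ((hαI b ⟨hc'b, hbε⟩).continuousAt.continuousWithinAt (s := Iio b)) ?_⟩
  filter_upwards [Ioo_mem_nhdsLT hc'b] with t ht
  exact huα ht ▸ huK' t ht

theorem exists_extension_of_eventually_mem_isCompact (hv : ContDiff ℝ 1 v) {U K : Set E}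
    (hU : IsOpen U) (hK : IsCompact K) (hKU : K ⊆ U) {u : ℝ → E} {a b : ℝ} (hab : a < b)
    (hu : ∀ t ∈ Ico a b, HasDerivAt u (v (u t)) t ∧ u t ∈ U)
    (huK : ∀ᶠ t in 𝓝[<] b, u t ∈ K) :
    ∃ ε > 0, ∃ w : ℝ → E, EqOn w u (Ico a b) ∧
      ∀ t ∈ Ico a (b + ε), HasDerivAt w (v (w t)) t ∧ w t ∈ U := by
  obtain ⟨c, hcb, e, hbe, α, hα, huα, hαK⟩ :=
    exists_solution_past_of_eventually_mem_isCompact hv hK hab (fun t ht ↦ (hu t ht).1) huK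
  obtain ⟨w, hwu, hwα, hw⟩ := exists_glue_of_eqOn_Ioo hcb (fun t ht ↦ (hu t ht).1) hα huα
  obtain ⟨l, e', ⟨hlb, hbe'⟩, he'U⟩ := mem_nhds_iff_exists_Ioo_subset.1
    ((hα b ⟨hcb, hbe⟩).continuousAt.preimage_mem_nhds (hU.mem_nhds (hKU hαK)))
  refine ⟨min (e' - b) (e - b), lt_min (by linarith) (by linarith), w, fun t ht ↦ hwu ht.2,
    fun t ht ↦ ⟨hw t ⟨ht.1, ht.2.trans_le (by linarith [min_le_right (e' - b) (e - b)])⟩, ?_⟩⟩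
  rcases lt_or_ge t b with htb | htb
  · exact hwu htb ▸ (hu t ⟨ht.1, htb⟩).2
  · exact hwα htb ▸ he'U ⟨hlb.trans_le htb, by linarith [ht.2, min_le_left (e' - b) (e - b)]⟩

end ODE

namespace Majorant

variable {n : ℕ}

noncomputable def J (n : ℕ) (x : ℝ) : ℝ :=
  ∫ r in (1 : ℝ)..x, (1 - 1/r) * r ^ (-(2 : ℝ)/n)

/-- The paper's `I(d, ρ) = ρ^{-2/n} (d² - n F(ρ))`, see `I_eq_rpow_mul`. -/
noncomputable def I (n : ℕ) (d ρ : ℝ) : ℝ :=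
  d ^ 2 * ρ ^ (-(2 : ℝ)/n) - 2 * J n ρ

theorem hasDerivAt_J {x : ℝ} (hx : 0 < x) :
    HasDerivAt (J n) ((1 - 1/x) * x ^ (-(2 : ℝ)/n)) x := by
  have hcont : ContinuousOn (fun r : ℝ ↦ (1 - 1/r) * r ^ (-(2 : ℝ)/n)) (Ioi 0) :=
    fun r hr ↦ ((continuousAt_const.sub (continuousAt_const.div continuousAt_id hr.ne')).mul
      (Real.continuousAt_rpow_const r _ (Or.inl hr.ne'))).continuousWithinAt
  exact integral_hasDerivAt_right
    (hcont.mono fun r hr ↦ (lt_min one_pos hx).trans_le hr.1).intervalIntegrable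
    (hcont.stronglyMeasurableAtFilter isOpen_Ioi x hx) (hcont.continuousAt (Ioi_mem_nhds hx))

theorem J_one : J n 1 = 0 := integral_same

theorem monotoneOn_J : MonotoneOn (J n) (Ici 1) := by
  refine monotoneOn_of_forall_hasDerivAt_nonneg (convex_Ici 1)
    (fun x hx ↦ hasDerivAt_J (zero_lt_one.trans_le hx)) fun x hx ↦ ?_
  rw [interior_Ici] at hx
  have : 1 / x ≤ 1 := (div_le_one (zero_lt_one.trans hx)).2 hx.le
  exact mul_nonneg (by linarith) (Real.rpow_nonneg (zero_lt_one.trans hx).le _)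

theorem antitoneOn_J : AntitoneOn (J n) (Ioc 0 1) := by
  refine antitoneOn_of_forall_hasDerivAt_nonpos (convex_Ioc 0 1)
    (fun x hx ↦ hasDerivAt_J hx.1) fun x hx ↦ ?_
  rw [interior_Ioc] at hx
  have : 1 ≤ 1 / x := (one_le_div hx.1).2 hx.2.le
  exact mul_nonpos_of_nonpos_of_nonneg (by linarith) (Real.rpow_nonneg hx.1.le _)

theorem J_nonneg {x : ℝ} (hx : 0 < x) : 0 ≤ J n x := by
  rcases le_total 1 x with h | h
  · exact J_one (n := n) ▸ monotoneOn_J self_mem_Ici h h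
  · exact J_one (n := n) ▸ antitoneOn_J ⟨hx, h⟩ ⟨one_pos, le_rfl⟩ h

theorem natCast_mul_F (hn : n ≠ 0) (ρ : ℝ) :
    (n : ℝ) * F n ρ = 2 * ρ ^ ((2 : ℝ)/n) * J n ρ := by
  rw [F, J]; field_simp

theorem I_eq_rpow_mul (hn : n ≠ 0) {d ρ : ℝ} (hρ : 0 < ρ) :
    I n d ρ = ρ ^ (-(2 : ℝ)/n) * (d ^ 2 - n * F n ρ) := by
  rw [I, natCast_mul_F hn, neg_div, Real.rpow_neg hρ.le]
  field_simp [(Real.rpow_pos_of_pos hρ ((2 : ℝ)/n)).ne']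

theorem sq_eq_I_add {d ρ : ℝ} (hρ : 0 < ρ) :
    d ^ 2 = (I n d ρ + 2 * J n ρ) * ρ ^ ((2 : ℝ)/n) := by
  rw [I, neg_div, Real.rpow_neg hρ.le]
  field_simp [(Real.rpow_pos_of_pos hρ ((2 : ℝ)/n)).ne']
  ring

theorem sq_mem_Icc_of_I_nonneg {d ρ ρ₀ : ℝ} (hI : 0 ≤ I n d ρ) (hρ₀ : 0 < ρ₀) (hρ₀ρ : ρ₀ ≤ ρ)
    (hρ : ρ ≤ 1) : d ^ 2 ∈ Icc (I n d ρ * ρ₀ ^ ((2 : ℝ)/n)) (I n d ρ + 2 * J n ρ₀) := by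
  have hρpos := hρ₀.trans_le hρ₀ρ
  have hJ := J_nonneg (n := n) hρpos
  have hJ₀ := antitoneOn_J (n := n) ⟨hρ₀, hρ₀ρ.trans hρ⟩ ⟨hρpos, hρ⟩ hρ₀ρ
  have h₁ := Real.rpow_le_rpow hρ₀.le hρ₀ρ (by positivity : (0 : ℝ) ≤ 2 / n)
  have h₂ := Real.rpow_le_one hρpos.le hρ (by positivity : (0 : ℝ) ≤ 2 / n)
  rw [sq_eq_I_add hρpos]
  constructor
  · calc I n d ρ * ρ₀ ^ ((2 : ℝ)/n) ≤ I n d ρ * ρ ^ ((2 : ℝ)/n) := by gcongr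
      _ ≤ _ := by gcongr; linarith
  · calc _ ≤ (I n d ρ + 2 * J n ρ) * 1 := by gcongr
      _ ≤ _ := by linarith

theorem cases_of_lt_sign_mul_sqrt (hn : n ≠ 0) {d ρ : ℝ} (hρ : 0 < ρ)
    (hd : d < Real.sign (ρ - 1) * √(n * F n ρ)) :
    (d < 0 ∧ 1 < ρ) ∨ (d < 0 ∧ 0 < I n d ρ) ∨ (1 < ρ ∧ I n d ρ < 0) := by
  have hpos := Real.rpow_pos_of_pos hρ (-(2 : ℝ)/n)
  rw [I_eq_rpow_mul hn hρ]
  rcases lt_trichotomy ρ 1 with hρ1 | rfl | hρ1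
  · rw [Real.sign_of_neg (sub_neg.2 hρ1), neg_one_mul] at hd
    have hd0 : d < 0 := hd.trans_le (neg_nonpos.2 (Real.sqrt_nonneg _))
    have := Real.lt_sq_of_sqrt_lt (lt_neg_of_lt_neg hd)
    exact Or.inr (Or.inl ⟨hd0, mul_pos hpos (by nlinarith)⟩)
  · rw [sub_self, Real.sign_zero, zero_mul] at hd
    have hF : F n 1 = 0 := by simp [F]
    exact Or.inr (Or.inl ⟨hd, mul_pos hpos (by rw [hF]; nlinarith)⟩)
  · rw [Real.sign_of_pos (sub_pos.2 hρ1), one_mul] at hd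
    rcases lt_or_ge d 0 with hd0 | hd0
    · exact Or.inl ⟨hd0, hρ1⟩
    · have := (Real.lt_sqrt hd0).1 hd
      exact Or.inr (Or.inr ⟨hρ1, mul_neg_of_pos_of_neg hpos (by linarith)⟩)

def IsSolutionOn (n : ℕ) (d ρ : ℝ → ℝ) (s : Set ℝ) : Prop :=
  ∀ t ∈ s, HasDerivAt d (-(1/(n : ℝ)) * (d t)^2 - (ρ t - 1)) t ∧
    HasDerivAt ρ (-(d t) * ρ t) t ∧ 0 < ρ t

namespace IsSolutionOn

variable {d ρ : ℝ → ℝ} {s : Set ℝ}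

theorem continuousOn_d (h : IsSolutionOn n d ρ s) : ContinuousOn d s :=
  fun t ht ↦ (h t ht).1.continuousAt.continuousWithinAt

theorem continuousOn_ρ (h : IsSolutionOn n d ρ s) : ContinuousOn ρ s :=
  fun t ht ↦ (h t ht).2.1.continuousAt.continuousWithinAt

theorem hasDerivAt_I (h : IsSolutionOn n d ρ s) (hn : n ≠ 0) {t : ℝ} (ht : t ∈ s) :
    HasDerivAt (fun t ↦ I n (d t) (ρ t)) 0 t := by
  obtain ⟨hd, hρ, hρpos⟩ := h t ht
  have hI : HasDerivAt (fun t ↦ d t ^ 2 * ρ t ^ (-(2 : ℝ)/n) - 2 * J n (ρ t))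
      (2 * d t * (-(1/(n : ℝ)) * d t ^ 2 - (ρ t - 1)) * ρ t ^ (-(2 : ℝ)/n)
        + d t ^ 2 * ((-(2 : ℝ)/n) * ρ t ^ (-(2 : ℝ)/n - 1) * (-(d t) * ρ t))
        - 2 * ((1 - 1 / ρ t) * ρ t ^ (-(2 : ℝ)/n) * (-(d t) * ρ t))) t := by
    refine (((hd.pow 2).congr_deriv (by ring)).mul ?_).sub
      (((hasDerivAt_J (n := n) hρpos).comp t hρ).const_mul 2)
    exact (hρ.rpow_const (p := -(2 : ℝ)/n) (Or.inl hρpos.ne')).congr_deriv (by ring)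
  refine hI.congr_deriv ?_
  rw [Real.rpow_sub hρpos, Real.rpow_one]
  field_simp
  ring

theorem I_eq (h : IsSolutionOn n d ρ s) (hn : n ≠ 0) (hs : Convex ℝ s) {t t₀ : ℝ} (ht : t ∈ s)
    (ht₀ : t₀ ∈ s) : I n (d t) (ρ t) = I n (d t₀) (ρ t₀) := by
  have := hs.norm_image_sub_le_of_norm_hasDerivWithin_le (C := 0)
    (fun x hx ↦ (h.hasDerivAt_I hn hx).hasDerivWithinAt) (fun _ _ ↦ norm_zero.le) ht₀ ht
  rwa [zero_mul, norm_le_zero_iff, sub_eq_zero] at this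

theorem monotoneOn_ρ (h : IsSolutionOn n d ρ s) {D : Set ℝ} (hD : Convex ℝ D) (hDs : D ⊆ s)
    (hd : ∀ t ∈ interior D, d t ≤ 0) : MonotoneOn ρ D :=
  monotoneOn_of_forall_hasDerivAt_nonneg hD (fun t ht ↦ (h t (hDs ht)).2.1) fun t ht ↦
    mul_nonneg (neg_nonneg.2 (hd t ht)) (h t (hDs (interior_subset ht))).2.2.le

theorem antitoneOn_ρ (h : IsSolutionOn n d ρ s) {D : Set ℝ} (hD : Convex ℝ D) (hDs : D ⊆ s)
    (hd : ∀ t ∈ interior D, 0 ≤ d t) : AntitoneOn ρ D :=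
  antitoneOn_of_forall_hasDerivAt_nonpos hD (fun t ht ↦ (h t (hDs ht)).2.1) fun t ht ↦
    mul_nonpos_of_nonpos_of_nonneg (neg_nonpos.2 (hd t ht)) (h t (hDs (interior_subset ht))).2.2.le

theorem antitoneOn_d (h : IsSolutionOn n d ρ s) {D : Set ℝ} (hD : Convex ℝ D) (hDs : D ⊆ s)
    (hρ : ∀ t ∈ interior D, 1 ≤ ρ t) : AntitoneOn d D :=
  antitoneOn_of_forall_hasDerivAt_nonpos hD (fun t ht ↦ (h t (hDs ht)).1) fun t ht ↦ by
    have := hρ t ht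
    have : 0 ≤ 1 / (n : ℝ) * d t ^ 2 := by positivity
    linarith

theorem trap (h : IsSolutionOn n d ρ s) (hs : Convex ℝ s) {t₀ : ℝ} (ht₀ : t₀ ∈ s)
    (hd : d t₀ < 0) (hρ : 1 < ρ t₀) :
    AntitoneOn d (s ∩ Ici t₀) ∧ MonotoneOn ρ (s ∩ Ici t₀) := by
  have hD : Convex ℝ (s ∩ Ici t₀) := hs.inter (convex_Ici t₀)
  -- at the first time `τ` with `d τ ≥ 0`, the monotonicity on `[t₀, τ]` gives `d τ ≤ d t₀ < 0`
  have hneg : ∀ t ∈ s ∩ Ici t₀, d t < 0 := by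
    intro t₁ ht₁
    by_contra! hd₁
    have hsub : Icc t₀ t₁ ⊆ s := hs.ordConnected.out ht₀ ht₁.1
    obtain ⟨τ, hτ, hdτ, hbefore⟩ := (h.continuousOn_d.mono hsub).exists_first_le ht₁.2 hd₁
    have hsubτ : Icc t₀ τ ⊆ s := (Icc_subset_Icc_right hτ.2).trans hsub
    have hρτ := h.monotoneOn_ρ (convex_Icc t₀ τ) hsubτ fun t ht ↦ by
      rw [interior_Icc] at ht; exact (hbefore t (Ioo_subset_Ico_self ht)).le
    have hdτ' := h.antitoneOn_d (convex_Icc t₀ τ) hsubτ fun t ht ↦ by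
      rw [interior_Icc] at ht
      exact hρ.le.trans (hρτ (left_mem_Icc.2 hτ.1) (Ioo_subset_Icc_self ht) ht.1.le)
    linarith [hdτ' (left_mem_Icc.2 hτ.1) (right_mem_Icc.2 hτ.1) hτ.1]
  have hmono := h.monotoneOn_ρ hD inter_subset_left fun t ht ↦ (hneg t (interior_subset ht)).le
  exact ⟨h.antitoneOn_d hD inter_subset_left fun t ht ↦
    hρ.le.trans (hmono ⟨ht₀, self_mem_Ici⟩ (interior_subset ht) (interior_subset ht).2), hmono⟩

/-- Riccati comparison: in the trap `(1/d)' ≥ 1/n` while `1/d < 0`. -/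
theorem lt_of_trap (h : IsSolutionOn n d ρ s) (hn : n ≠ 0) (hs : Convex ℝ s) {t₀ : ℝ}
    (ht₀ : t₀ ∈ s) (hd : d t₀ < 0) (hρ : 1 < ρ t₀) {t : ℝ} (ht : t ∈ s) (htt₀ : t₀ ≤ t) :
    t < t₀ - n / d t₀ := by
  obtain ⟨hanti, hmono⟩ := h.trap hs ht₀ hd hρ
  have hdneg : ∀ x ∈ s ∩ Ici t₀, d x < 0 := fun x hx ↦
    (hanti ⟨ht₀, self_mem_Ici⟩ hx hx.2).trans_lt hd
  have hderiv : ∀ x ∈ interior (s ∩ Ici t₀),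
      1 / (n : ℝ) ≤ -(-(1 / (n : ℝ)) * d x ^ 2 - (ρ x - 1)) / d x ^ 2 := fun x hx ↦ by
    have hx' := interior_subset hx
    have h1 : 1 ≤ ρ x := hρ.le.trans (hmono ⟨ht₀, self_mem_Ici⟩ hx' hx'.2)
    have hdx := (hdneg x hx').ne
    have : -(-(1 / (n : ℝ)) * d x ^ 2 - (ρ x - 1)) / d x ^ 2 = 1 / n + (ρ x - 1) / d x ^ 2 := by
      field_simp; ring
    rw [this]
    exact le_add_of_nonneg_right (div_nonneg (by linarith) (sq_nonneg _))
  have key := (hs.inter (convex_Ici t₀)).mul_sub_le_image_sub_of_forall_hasDerivAt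
    (f := fun x ↦ (d x)⁻¹) (fun x hx ↦ (h x hx.1).1.inv (hdneg x hx).ne) hderiv
    ⟨ht₀, self_mem_Ici⟩ ⟨ht, htt₀⟩ htt₀
  have hinv : (d t)⁻¹ < 0 := inv_lt_zero.2 (hdneg t ⟨ht, htt₀⟩)
  calc t = t₀ + n * (1 / n * (t - t₀)) := by field_simp; ring
    _ < t₀ + n * -(d t₀)⁻¹ := by gcongr; linarith
    _ = t₀ - n / d t₀ := by ring

theorem trap_sq_eq (h : IsSolutionOn n d ρ s) (hn : n ≠ 0) (hs : Convex ℝ s) {t₀ : ℝ}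
    (ht₀ : t₀ ∈ s) (hd : d t₀ < 0) (hρ : 1 < ρ t₀) {t : ℝ} (ht : t ∈ s ∩ Ici t₀) :
    d t ^ 2 = (I n (d t₀) (ρ t₀) + 2 * J n (ρ t)) * ρ t ^ ((2 : ℝ)/n) ∧
      0 < I n (d t₀) (ρ t₀) + 2 * J n (ρ t₀) ∧
      I n (d t₀) (ρ t₀) + 2 * J n (ρ t₀) ≤ I n (d t₀) (ρ t₀) + 2 * J n (ρ t) ∧ 1 < ρ t := by
  have hρt : ρ t₀ ≤ ρ t := (h.trap hs ht₀ hd hρ).2 ⟨ht₀, self_mem_Ici⟩ ht ht.2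
  have h₀ := sq_eq_I_add (n := n) (d := d t₀) (h t₀ ht₀).2.2
  refine ⟨h.I_eq hn hs ht.1 ht₀ ▸ sq_eq_I_add (h t ht.1).2.2, ?_, ?_, hρ.trans_le hρt⟩
  · by_contra! hc
    nlinarith [Real.rpow_pos_of_pos (h t₀ ht₀).2.2 ((2 : ℝ)/n)]
  · linarith [monotoneOn_J (n := n) hρ.le (hρ.le.trans hρt) hρt]

theorem bddAbove_ρ_of_bddBelow_d (h : IsSolutionOn n d ρ s) (hn : n ≠ 0) (hs : Convex ℝ s)
    {t₀ : ℝ} (ht₀ : t₀ ∈ s) (hd : d t₀ < 0) (hρ : 1 < ρ t₀)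
    (hbdd : BddBelow (d '' (s ∩ Ici t₀))) : BddAbove (ρ '' (s ∩ Ici t₀)) := by
  obtain ⟨m, hm⟩ := hbdd
  set c₀ := I n (d t₀) (ρ t₀) + 2 * J n (ρ t₀)
  have hr : (2 : ℝ) / n ≠ 0 := div_ne_zero two_ne_zero (Nat.cast_ne_zero.2 hn)
  refine ⟨(m ^ 2 / c₀) ^ ((2 : ℝ) / n)⁻¹, ?_⟩
  rintro _ ⟨t, ht, rfl⟩
  obtain ⟨hsq, hc₀, hc₀t, hρt⟩ := h.trap_sq_eq hn hs ht₀ hd hρ ht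
  have hdt : d t < 0 := ((h.trap hs ht₀ hd hρ).1 ⟨ht₀, self_mem_Ici⟩ ht ht.2).trans_lt hd
  have hmd : m ≤ d t := hm (mem_image_of_mem d ht)
  have hpow : ρ t ^ ((2 : ℝ)/n) ≤ m ^ 2 / c₀ := by
    rw [le_div_iff₀ hc₀]
    nlinarith [Real.rpow_nonneg (zero_le_one.trans hρt.le) ((2 : ℝ)/n)]
  calc ρ t = (ρ t ^ ((2 : ℝ)/n)) ^ ((2 : ℝ)/n)⁻¹ :=
        (Real.rpow_rpow_inv (zero_le_one.trans hρt.le) hr).symm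
    _ ≤ (m ^ 2 / c₀) ^ ((2 : ℝ)/n)⁻¹ := by gcongr

theorem bddBelow_d_of_bddAbove_ρ (h : IsSolutionOn n d ρ s) (hn : n ≠ 0) (hs : Convex ℝ s)
    {t₀ : ℝ} (ht₀ : t₀ ∈ s) (hd : d t₀ < 0) (hρ : 1 < ρ t₀)
    (hbdd : BddAbove (ρ '' (s ∩ Ici t₀))) : BddBelow (d '' (s ∩ Ici t₀)) := by
  obtain ⟨Q, hQ⟩ := hbdd
  refine ⟨-√((I n (d t₀) (ρ t₀) + 2 * J n Q) * Q ^ ((2 : ℝ)/n)), ?_⟩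
  rintro _ ⟨t, ht, rfl⟩
  obtain ⟨hsq, hc₀, hc₀t, hρt⟩ := h.trap_sq_eq hn hs ht₀ hd hρ ht
  have hρQ : ρ t ≤ Q := hQ (mem_image_of_mem ρ ht)
  refine Real.neg_sqrt_le_of_sq_le ?_
  rw [hsq]
  have := monotoneOn_J (n := n) hρt.le (hρt.le.trans hρQ) hρQ
  gcongr
  linarith

/-- Because `I(0, ρ) = -2 J(ρ) ≤ 0`. -/
theorem d_neg_of_I_pos (h : IsSolutionOn n d ρ s) (hn : n ≠ 0) (hs : Convex ℝ s) {t₀ : ℝ}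
    (ht₀ : t₀ ∈ s) (hd : d t₀ < 0) (hI : 0 < I n (d t₀) (ρ t₀)) {t : ℝ} (ht : t ∈ s) :
    d t < 0 := by
  by_contra! hdt
  obtain ⟨τ, hτ, hdτ⟩ :=
    hs.isPreconnected.intermediate_value ht₀ ht h.continuousOn_d ⟨hd.le, hdt⟩
  have hIτ := h.I_eq hn hs hτ ht₀
  rw [I, hdτ, zero_pow two_ne_zero, zero_mul] at hIτ
  linarith [J_nonneg (n := n) (h τ hτ).2.2]

/-- Because `I(d, 1) = d² ≥ 0`. -/
theorem one_lt_ρ_of_I_neg (h : IsSolutionOn n d ρ s) (hn : n ≠ 0) (hs : Convex ℝ s) {t₀ : ℝ}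
    (ht₀ : t₀ ∈ s) (hρ : 1 < ρ t₀) (hI : I n (d t₀) (ρ t₀) < 0) {t : ℝ} (ht : t ∈ s) :
    1 < ρ t := by
  by_contra! hρt
  obtain ⟨τ, hτ, hρτ⟩ :=
    hs.isPreconnected.intermediate_value ht ht₀ h.continuousOn_ρ ⟨hρt, hρ.le⟩
  have hIτ := h.I_eq hn hs hτ ht₀
  rw [I, hρτ, Real.one_rpow, J_one] at hIτ
  nlinarith [sq_nonneg (d τ)]

end IsSolutionOn

def domain (T : EReal) : Set ℝ := {t | 0 ≤ t ∧ (t : EReal) < T}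

variable {d ρ : ℝ → ℝ} {T : EReal}

theorem convex_domain (T : EReal) : Convex ℝ (domain T) :=
  convex_iff_ordConnected.2 ⟨fun _ hx _ hy _ hz ↦
    ⟨hx.1.trans hz.1, (EReal.coe_le_coe_iff.2 hz.2).trans_lt hy.2⟩⟩

theorem domain_coe (b : ℝ) : domain b = Ico 0 b := by
  ext t; simp [domain]

theorem zero_mem_domain (hT : 0 < T) : (0 : ℝ) ∈ domain T := ⟨le_rfl, hT⟩

theorem exists_eq_coe_of_forall_le (hT : 0 < T) {B : ℝ} (hB : ∀ t ∈ domain T, t ≤ B) :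
    ∃ b : ℝ, T = b := by
  induction T using EReal.rec with
  | bot => exact absurd hT (not_lt.2 bot_le)
  | coe b => exact ⟨b, rfl⟩
  | top => linarith [hB (max B 0 + 1) ⟨by positivity, EReal.coe_lt_top _⟩, le_max_left B 0]

def IsMaximal (n : ℕ) (d ρ : ℝ → ℝ) (T : EReal) : Prop :=
  ∀ (T' : EReal) (d₁ ρ₁ : ℝ → ℝ), T < T' →
    ¬ ((∀ t : ℝ, 0 ≤ t → (t : EReal) < T → d₁ t = d t ∧ ρ₁ t = ρ t) ∧
      (∀ t : ℝ, 0 ≤ t → (t : EReal) < T' →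
        HasDerivAt d₁ (-(1/(n : ℝ)) * (d₁ t)^2 - (ρ₁ t - 1)) t ∧
        HasDerivAt ρ₁ (-(d₁ t) * ρ₁ t) t ∧ 0 < ρ₁ t))

namespace IsMaximal

theorem not_eventually_mem_isCompact {b : ℝ} (hb : 0 < b)
    (hsol : IsSolutionOn n d ρ (domain b)) (hmax : IsMaximal n d ρ b)
    {K : Set (ℝ × ℝ)} (hK : IsCompact K) (hKpos : ∀ p ∈ K, 0 < p.2) :
    ¬ ∀ᶠ t in 𝓝[<] b, (d t, ρ t) ∈ K := by
  intro hdρK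
  rw [domain_coe] at hsol
  have hv : ContDiff ℝ 1 fun p : ℝ × ℝ ↦ (-(1/(n : ℝ)) * p.1 ^ 2 - (p.2 - 1), -p.1 * p.2) := by
    fun_prop
  obtain ⟨ε, hε, w, hwdρ, hw⟩ := exists_extension_of_eventually_mem_isCompact hv
    (isOpen_lt continuous_const continuous_snd) hK hKpos hb
    (fun t ht ↦ ⟨(hsol t ht).1.prodMk (hsol t ht).2.1, (hsol t ht).2.2⟩) hdρK
  refine hmax (b + ε : ℝ) (fun t ↦ (w t).1) (fun t ↦ (w t).2)
    (EReal.coe_lt_coe_iff.2 (by linarith)) ⟨fun t ht hb' ↦ ?_, fun t ht hb' ↦ ?_⟩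
  · rw [hwdρ ⟨ht, EReal.coe_lt_coe_iff.1 hb'⟩]
    exact ⟨rfl, rfl⟩
  · obtain ⟨hderiv, hpos⟩ := hw t ⟨ht, EReal.coe_lt_coe_iff.1 hb'⟩
    exact ⟨(ContinuousLinearMap.fst ℝ ℝ ℝ).hasFDerivAt.comp_hasDerivAt t hderiv,
      (ContinuousLinearMap.snd ℝ ℝ ℝ).hasFDerivAt.comp_hasDerivAt t hderiv, hpos⟩

theorem false_of_bounded (hsol : IsSolutionOn n d ρ (domain T)) (hmax : IsMaximal n d ρ T)
    (hT : 0 < T) {B : ℝ} (hB : ∀ t ∈ domain T, t ≤ B)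
    {K : Set (ℝ × ℝ)} (hK : IsCompact K) (hKpos : ∀ p ∈ K, 0 < p.2)
    (hdρK : ∀ t ∈ domain T, (d t, ρ t) ∈ K) : False := by
  obtain ⟨b, rfl⟩ := exists_eq_coe_of_forall_le hT hB
  have hb : 0 < b := EReal.coe_pos.1 hT
  refine hmax.not_eventually_mem_isCompact hb hsol hK hKpos ?_
  filter_upwards [Ioo_mem_nhdsLT hb] with t ht
  exact hdρK t ⟨ht.1.le, EReal.coe_lt_coe_iff.2 ht.2⟩

theorem exists_trap_of_I_pos (hn : n ≠ 0) (hsol : IsSolutionOn n d ρ (domain T))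
    (hmax : IsMaximal n d ρ T) (hT : 0 < T) (hd0 : d 0 < 0)
    (hI : 0 < I n (d 0) (ρ 0)) : ∃ t ∈ domain T, d t < 0 ∧ 1 < ρ t := by
  by_contra! hle
  have hs := convex_domain T
  have h0 := zero_mem_domain hT
  have hdneg : ∀ t ∈ domain T, d t < 0 := fun t ht ↦ hsol.d_neg_of_I_pos hn hs h0 hd0 hI ht
  have hρle : ∀ t ∈ domain T, ρ t ≤ 1 := fun t ht ↦ hle t ht (hdneg t ht)
  have hρ0t : ∀ t ∈ domain T, ρ 0 ≤ ρ t := fun t ht ↦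
    hsol.monotoneOn_ρ hs subset_rfl (fun t ht ↦ (hdneg t (interior_subset ht)).le) h0 ht ht.1
  have hρ0pos : 0 < ρ 0 := (hsol 0 h0).2.2
  have hsq : ∀ t ∈ domain T, d t ^ 2 ∈
      Icc (I n (d 0) (ρ 0) * ρ 0 ^ ((2 : ℝ)/n)) (I n (d 0) (ρ 0) + 2 * J n (ρ 0)) := by
    intro t ht
    rw [← hsol.I_eq hn hs ht h0] at hI ⊢
    exact sq_mem_Icc_of_I_nonneg hI.le hρ0pos (hρ0t t ht) (hρle t ht)
  -- `ρ' = |d| ρ ≥ c ρ₀` while `ρ ≤ 1`, so the lifespan is bounded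
  set c := √(I n (d 0) (ρ 0) * ρ 0 ^ ((2 : ℝ)/n))
  have hc : 0 < c := Real.sqrt_pos.2 (mul_pos hI (Real.rpow_pos_of_pos hρ0pos _))
  have hdc : ∀ t ∈ domain T, c ≤ -d t := fun t ht ↦
    (Real.sqrt_le_left (neg_nonneg.2 (hdneg t ht).le)).2 ((neg_sq (d t)).symm ▸ (hsq t ht).1)
  have hB : ∀ t ∈ domain T, t ≤ (1 - ρ 0) / (c * ρ 0) := by
    intro t ht
    have := hs.mul_sub_le_image_sub_of_forall_hasDerivAt (fun x hx ↦ (hsol x hx).2.1)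
      (C := c * ρ 0) (fun x hx ↦ by
        have hx' := interior_subset hx
        nlinarith [hdc x hx', hρ0t x hx', hc.le]) h0 ht ht.1
    rw [le_div_iff₀ (mul_pos hc hρ0pos)]
    linarith [hρle t ht]
  exact hmax.false_of_bounded hsol hT hB (K := Icc (-√(I n (d 0) (ρ 0) + 2 * J n (ρ 0))) 0 ×ˢ
    Icc (ρ 0) 1) (isCompact_Icc.prod isCompact_Icc) (fun p hp ↦ hρ0pos.trans_le hp.2.1)
    fun t ht ↦ ⟨⟨Real.neg_sqrt_le_of_sq_le (hsq t ht).2, (hdneg t ht).le⟩, hρ0t t ht, hρle t ht⟩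

theorem exists_trap_of_I_neg (hn : n ≠ 0) (hsol : IsSolutionOn n d ρ (domain T))
    (hmax : IsMaximal n d ρ T) (hT : 0 < T) (hρ0 : 1 < ρ 0)
    (hI : I n (d 0) (ρ 0) < 0) : ∃ t ∈ domain T, d t < 0 ∧ 1 < ρ t := by
  by_contra! hle
  have hs := convex_domain T
  have h0 := zero_mem_domain hT
  have hρ1 : ∀ t ∈ domain T, 1 < ρ t := fun t ht ↦ hsol.one_lt_ρ_of_I_neg hn hs h0 hρ0 hI ht
  have hdnn : ∀ t ∈ domain T, 0 ≤ d t := fun t ht ↦ not_lt.1 fun hdt ↦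
    (hle t ht hdt).not_gt (hρ1 t ht)
  -- `2 J(ρ) ≥ -I₀ > 0 = 2 J(1)` keeps `ρ` above some `x > 1`, so `d' ≤ -(x - 1)`
  obtain ⟨x, hJx, hx⟩ : ∃ x, J n x < -I n (d 0) (ρ 0) / 2 ∧ 1 < x :=
    ((((hasDerivAt_J (n := n) one_pos).continuousAt.eventually
      (gt_mem_nhds (by rw [J_one]; linarith))).filter_mono nhdsWithin_le_nhds).and
      (self_mem_nhdsWithin (s := Ioi 1))).exists
  have hρx : ∀ t ∈ domain T, x ≤ ρ t := by
    intro t ht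
    by_contra! hρt
    have hJ := monotoneOn_J (n := n) (hρ1 t ht).le hx.le hρt.le
    have hIt := hsol.I_eq hn hs ht h0
    rw [I] at hIt
    nlinarith [Real.rpow_nonneg (hsol t ht).2.2.le (-(2 : ℝ)/n), sq_nonneg (d t)]
  have hB : ∀ t ∈ domain T, t ≤ d 0 / (x - 1) := by
    intro t ht
    have := hs.image_sub_le_mul_sub_of_forall_hasDerivAt (fun y hy ↦ (hsol y hy).1)
      (C := -(x - 1)) (fun y hy ↦ by
        have : 0 ≤ 1 / (n : ℝ) * d y ^ 2 := by positivity
        linarith [hρx y (interior_subset hy)]) h0 ht ht.1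
    rw [le_div_iff₀ (by linarith)]
    linarith [hdnn t ht]
  have hdle := hsol.antitoneOn_d hs subset_rfl fun t ht ↦ (hρ1 t (interior_subset ht)).le
  have hρle := hsol.antitoneOn_ρ hs subset_rfl fun t ht ↦ hdnn t (interior_subset ht)
  exact hmax.false_of_bounded hsol hT hB (K := Icc 0 (d 0) ×ˢ Icc 1 (ρ 0))
    (isCompact_Icc.prod isCompact_Icc) (fun p hp ↦ one_pos.trans_le hp.2.1) fun t ht ↦
    ⟨⟨hdnn t ht, hdle h0 ht ht.1⟩, (hρ1 t ht).le, hρle h0 ht ht.1⟩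

theorem exists_trap (hn : n ≠ 0) (hsol : IsSolutionOn n d ρ (domain T))
    (hmax : IsMaximal n d ρ T) (hT : 0 < T) (hρ0 : 0 < ρ 0)
    (hd0 : d 0 < Real.sign (ρ 0 - 1) * √(n * F n (ρ 0))) :
    ∃ t ∈ domain T, d t < 0 ∧ 1 < ρ t := by
  rcases cases_of_lt_sign_mul_sqrt hn hρ0 hd0 with ⟨hd, hρ⟩ | ⟨hd, hI⟩ | ⟨hρ, hI⟩
  · exact ⟨0, zero_mem_domain hT, hd, hρ⟩
  · exact hmax.exists_trap_of_I_pos hn hsol hT hd hI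
  · exact hmax.exists_trap_of_I_neg hn hsol hT hρ hI

theorem tendsto_of_trap (hn : n ≠ 0) {b : ℝ} (hsol : IsSolutionOn n d ρ (domain b))
    (hmax : IsMaximal n d ρ b) {t₀ : ℝ} (ht₀ : t₀ ∈ domain b) (hd : d t₀ < 0) (hρ : 1 < ρ t₀) :
    Tendsto d (𝓝[<] b) atBot ∧ Tendsto ρ (𝓝[<] b) atTop := by
  have hs := convex_domain (b : EReal)
  have ht₀b : t₀ < b := EReal.coe_lt_coe_iff.1 ht₀.2
  obtain ⟨hanti, hmono⟩ := hsol.trap hs ht₀ hd hρ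
  have hD : domain b ∩ Ici t₀ = Ico t₀ b := by
    rw [domain_coe, Ico_inter_Ici, max_eq_right ht₀.1]
  have hbdd : ¬ (BddBelow (d '' Ico t₀ b) ∧ BddAbove (ρ '' Ico t₀ b)) := by
    rintro ⟨⟨m, hm⟩, ⟨Q, hQ⟩⟩
    refine hmax.not_eventually_mem_isCompact (ht₀.1.trans_lt ht₀b) hsol
      (K := Icc m (d t₀) ×ˢ Icc 1 Q) (isCompact_Icc.prod isCompact_Icc)
      (fun p hp ↦ one_pos.trans_le hp.2.1) ?_
    filter_upwards [Ioo_mem_nhdsLT ht₀b] with t ht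
    have htD : t ∈ domain b ∩ Ici t₀ := hD ▸ Ioo_subset_Ico_self ht
    exact ⟨⟨hm (mem_image_of_mem d (Ioo_subset_Ico_self ht)),
      hanti ⟨ht₀, self_mem_Ici⟩ htD htD.2⟩,
      (hρ.trans_le (hmono ⟨ht₀, self_mem_Ici⟩ htD htD.2)).le,
      hQ (mem_image_of_mem ρ (Ioo_subset_Ico_self ht))⟩
  have hρ_of_d := hsol.bddAbove_ρ_of_bddBelow_d hn hs ht₀ hd hρ
  have hd_of_ρ := hsol.bddBelow_d_of_bddAbove_ρ hn hs ht₀ hd hρ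
  rw [hD] at hanti hmono hρ_of_d hd_of_ρ
  exact ⟨hanti.tendsto_nhdsLT_atBot fun h ↦ hbdd ⟨h, hρ_of_d h⟩,
    hmono.tendsto_nhdsLT_atTop fun h ↦ hbdd ⟨hd_of_ρ h, h⟩⟩

end IsMaximal

end Majorant

/-- Blow-up of the majorant system for supercritical initial data:
a maximal solution on `[0, T)` has `T < ∞` and `d → -∞`, `ρ → +∞` as `t ↑ T`. -/
theorem majorant_blowup (n : ℕ) (hn : 1 ≤ n) (d ρ : ℝ → ℝ) (T : EReal)
    (hTpos : 0 < T)
    (hsol : ∀ t : ℝ, 0 ≤ t → (t : EReal) < T →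
      HasDerivAt d (-(1/(n : ℝ)) * (d t)^2 - (ρ t - 1)) t ∧
      HasDerivAt ρ (-(d t) * ρ t) t ∧ 0 < ρ t)
    (hmax : ∀ (T' : EReal) (d₁ ρ₁ : ℝ → ℝ), T < T' →
      ¬ ((∀ t : ℝ, 0 ≤ t → (t : EReal) < T → d₁ t = d t ∧ ρ₁ t = ρ t) ∧
        (∀ t : ℝ, 0 ≤ t → (t : EReal) < T' →
          HasDerivAt d₁ (-(1/(n : ℝ)) * (d₁ t)^2 - (ρ₁ t - 1)) t ∧
          HasDerivAt ρ₁ (-(d₁ t) * ρ₁ t) t ∧ 0 < ρ₁ t)))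
    (hρ0 : 0 < ρ 0)
    (hd0 : d 0 < Real.sign (ρ 0 - 1) * Real.sqrt (n * F n (ρ 0))) :
    T < ⊤ ∧ ∃ Tc : ℝ, T = (Tc : EReal) ∧
      Tendsto d (nhdsWithin Tc (Set.Iio Tc)) atBot ∧
      Tendsto ρ (nhdsWithin Tc (Set.Iio Tc)) atTop := by
  have hn0 : n ≠ 0 := Nat.one_le_iff_ne_zero.1 hn
  have hsolT : Majorant.IsSolutionOn n d ρ (Majorant.domain T) := fun t ht ↦ hsol t ht.1 ht.2
  obtain ⟨t₀, ht₀, hd, hρ⟩ := Majorant.IsMaximal.exists_trap hn0 hsolT hmax hTpos hρ0 hd0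
  obtain ⟨b, rfl⟩ := Majorant.exists_eq_coe_of_forall_le hTpos
    (B := max t₀ (t₀ - n / d t₀)) fun t ht ↦ by
      rcases le_total t₀ t with h | h
      · exact (hsolT.lt_of_trap hn0 (Majorant.convex_domain T) ht₀ hd hρ ht h).le.trans
          (le_max_right _ _)
      · exact h.trans (le_max_left _ _)
  exact ⟨EReal.coe_lt_top b, b, rfl,
    Majorant.IsMaximal.tendsto_of_trap hn0 hsolT hmax ht₀ hd hρ⟩
end
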